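/- Let d ≥ 2, φ_0 ∈ (0, π/2], and let D : (0,φ_0] → [1,∞) be a continuous decreasing function. Assume that for every φ ∈ (0,φ_0] there exists a cover of S^d by finitely many spherical caps all of geodesic radius φ whose density (the sum of the normalized volumes of the caps) is at most D(φ). Then for every n ≥ D(φ_0)/V(φ_0) one has n·disp_C(n,d) ≤ D(φ(n)). -/

import Mathlib

/-! Cap volumes do not depend on the center (`σ` is invariant under reflections), so a cover by
`m` caps of radius `φ` has density `m V(φ)`. Let `τ = φ(n)`. The hypothesis at `φ₀` gives a
cover by `m₀ ≤ D(φ₀)/V(φ₀) ≤ n` caps, so `τ ≤ φ₀`. The radii admitting an `n`-cap cover form a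
closed set (project along the compact factor `(S^d)^n`), so some `n`-point set `P` covers at
radius `τ` itself, and `τ > 0` because `S^d` is infinite. A cap missing `P` has radius `ρ < τ`.
For `ψ < τ` the hypothesis' `ψ`-cover needs more than `n` caps, so `n V(ψ) ≤ D(ψ)`; letting
`ψ ↑ τ` and using continuity of `D` gives `n V(ρ) ≤ D(τ)`, hence `n disp_C(P) ≤ D(τ)`. -/

open scoped Real InnerProductSpace
open MeasureTheory Filter

noncomputable section

/-- The `d`-dimensional unit sphere `S^d`, as a subtype of `ℝ^{d+1}`. -/
abbrev Sph (d : ℕ) := Metric.sphere (0 : EuclideanSpace ℝ (Fin (d + 1))) 1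

/-- Geodesic distance `ρ(x,y) = arccos⟨x,y⟩` on the sphere. -/
def geoDist {d : ℕ} (x y : Sph d) : ℝ :=
  Real.arccos ⟪(x : EuclideanSpace ℝ (Fin (d + 1))), (y : EuclideanSpace ℝ (Fin (d + 1)))⟫_ℝ

/-- Spherical cap (geodesic ball) with center `x` and geodesic radius `φ`. -/
def cap {d : ℕ} (x : Sph d) (φ : ℝ) : Set (Sph d) :=
  {y : Sph d | geoDist x y ≤ φ}

/-- The normalized Lebesgue (surface) measure `σ` on the sphere `S^d`. -/
def sphMeasure (d : ℕ) : Measure (Sph d) :=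
  ((volume : Measure (EuclideanSpace ℝ (Fin (d + 1)))).toSphere Set.univ)⁻¹ •
    (volume : Measure (EuclideanSpace ℝ (Fin (d + 1)))).toSphere

/-- Spherical cap dispersion `disp_C(P)` of a point set `P ⊆ S^d`:
the supremum of `σ(C)` over caps `C` avoiding `P`. -/
def capDisp {d : ℕ} (P : Set (Sph d)) : ℝ :=
  sSup {v : ℝ | ∃ x : Sph d, ∃ φ ∈ Set.Icc (0 : ℝ) π,
    cap x φ ∩ P = ∅ ∧ v = (sphMeasure d (cap x φ)).toReal}

/-- Minimal spherical cap dispersion `disp_C(n, d)`: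
the infimum of `disp_C({x_1, …, x_n})` over `x_1, …, x_n ∈ S^d`. -/
def minCapDisp (d n : ℕ) : ℝ :=
  sInf {v : ℝ | ∃ x : Fin n → Sph d, v = capDisp (Set.range x)}

/-- Normalized volume `V(φ)` of a spherical cap of geodesic radius `φ`
(centered at the first standard basis vector). -/
def capVol (d : ℕ) (φ : ℝ) : ℝ :=
  (sphMeasure d (cap (⟨EuclideanSpace.single 0 1, by
    simp [EuclideanSpace.norm_single]⟩ : Sph d) φ)).toReal

/-- Minimal geodesic covering radius `φ(n)` of `S^d` with `n` caps. -/
def covRad (d n : ℕ) : ℝ :=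
  sInf {φ : ℝ | 0 < φ ∧ ∃ x : Fin n → Sph d, (⋃ i, cap (x i) φ) = Set.univ}

/-- Minimal spherical covering density `dens(n, d)`:
the infimal total normalized volume of `n` equal caps covering `S^d`. -/
def minDens (d n : ℕ) : ℝ :=
  sInf {s : ℝ | ∃ φ ∈ Set.Ioc (0 : ℝ) π, ∃ x : Fin n → Sph d,
    (⋃ i, cap (x i) φ) = Set.univ ∧
    s = ∑ i : Fin n, (sphMeasure d (cap (x i) φ)).toReal}

open Set
open scoped Pointwise

theorem Monotone.le_of_le_on_Ioo_of_continuousWithinAt {f g : ℝ → ℝ} {a b : ℝ}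
    (hf : Monotone f) (hab : a < b) (hg : ContinuousWithinAt g (Ioo a b) b)
    (hfg : ∀ x ∈ Ioo a b, f x ≤ g x) {x : ℝ} (hx : x < b) : f x ≤ g b := by
  have hsub : Ioo (max x a) b ⊆ Ioo a b := Ioo_subset_Ioo_left (le_max_right x a)
  have hmem : b ∈ closure (Ioo (max x a) b) := by
    rw [closure_Ioo (max_lt hx hab).ne]
    exact right_mem_Icc.mpr (max_lt hx hab).le
  exact continuousWithinAt_const.closure_le hmem (hg.mono hsub) fun y hy =>
    (hf ((le_max_left x a).trans hy.1.le)).trans (hfg y (hsub hy))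

section

variable {d : ℕ}

local notation "E" => EuclideanSpace ℝ (Fin (d + 1))

instance : Nonempty (Sph d) := (NormedSpace.sphere_nonempty.mpr zero_le_one).to_subtype

theorem norm_coe_sph (x : Sph d) : ‖(x : E)‖ = 1 := mem_sphere_zero_iff_norm.mp x.2

theorem geoDist_comm (x y : Sph d) : geoDist x y = geoDist y x := by
  rw [geoDist, geoDist, real_inner_comm]

theorem Continuous.geoDist {α : Type*} [TopologicalSpace α] {f g : α → Sph d}
    (hf : Continuous f) (hg : Continuous g) : Continuous fun a => geoDist (f a) (g a) :=
  Real.continuous_arccos.comp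
    ((continuous_subtype_val.comp hf).inner (continuous_subtype_val.comp hg))

theorem isClosed_cap (x : Sph d) (φ : ℝ) : IsClosed (cap x φ) :=
  isClosed_le (continuous_const.geoDist continuous_id) continuous_const

theorem cap_zero (x : Sph d) : cap x 0 = {x} := by
  ext y
  simp only [cap, geoDist, mem_ofPred_eq, mem_singleton_iff]
  constructor
  · intro h
    have h1 : 1 ≤ ⟪(x : E), (y : E)⟫_ℝ :=
      Real.arccos_eq_zero.mp (le_antisymm h (Real.arccos_nonneg _))
    have h2 : ⟪(x : E), (y : E)⟫_ℝ ≤ 1 :=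
      (real_inner_le_norm _ _).trans_eq (by rw [norm_coe_sph, norm_coe_sph, one_mul])
    exact (Subtype.ext ((inner_eq_one_iff_of_norm_eq_one (norm_coe_sph x) (norm_coe_sph y)).mp
      (le_antisymm h2 h1))).symm
  · rintro rfl
    rw [real_inner_self_eq_norm_mul_norm, norm_coe_sph, one_mul, Real.arccos_one]

theorem infinite_sph (hd : 1 ≤ d) : Infinite (Sph d) := by
  have hrank : 1 < Module.rank ℝ E :=
    Module.one_lt_rank_of_one_lt_finrank (by rw [finrank_euclideanSpace_fin]; omega)
  have hnontriv : (Metric.sphere (0 : E) 1).Nontrivial :=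
    ⟨EuclideanSpace.single 0 1, by simp,
      -EuclideanSpace.single 0 1, by simp, by
      intro h
      have := congrArg (fun v : E => v 0) h
      norm_num at this⟩
  exact infinite_coe_iff.mpr ((isPreconnected_sphere hrank 0 1).infinite_of_nontrivial hnontriv)

def sphereMap (e : E ≃ₗᵢ[ℝ] E) (y : Sph d) : Sph d :=
  ⟨e y, by rw [mem_sphere_zero_iff_norm, e.norm_map, norm_coe_sph]⟩

theorem continuous_sphereMap (e : E ≃ₗᵢ[ℝ] E) : Continuous (sphereMap e) :=
  (e.continuous.comp continuous_subtype_val).subtype_mk _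

theorem image_val_preimage_sphereMap (e : E ≃ₗᵢ[ℝ] E) (s : Set (Sph d)) :
    Subtype.val '' (sphereMap e ⁻¹' s) = e.symm '' (Subtype.val '' s) := by
  ext v
  constructor
  · rintro ⟨y, hy, rfl⟩
    exact ⟨_, ⟨sphereMap e y, hy, rfl⟩, e.symm_apply_apply _⟩
  · rintro ⟨_, ⟨z, hz, rfl⟩, rfl⟩
    refine ⟨sphereMap e.symm z, ?_, rfl⟩
    simpa [sphereMap] using hz

theorem sphMeasure_preimage_sphereMap (e : E ≃ₗᵢ[ℝ] E) {s : Set (Sph d)}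
    (hs : MeasurableSet s) : sphMeasure d (sphereMap e ⁻¹' s) = sphMeasure d s := by
  have hcone : Ioo (0 : ℝ) 1 • (e.symm '' (Subtype.val '' s)) =
      e.symm '' (Ioo (0 : ℝ) 1 • (Subtype.val '' s)) := by
    rw [← image2_smul, ← image2_smul,
      image_image2_distrib_right fun a b => (e.symm.map_smul a b)]
  rw [sphMeasure, Measure.smul_apply, Measure.smul_apply,
    Measure.toSphere_apply' _ (hs.preimage (continuous_sphereMap e).measurable),
    Measure.toSphere_apply' _ hs, image_val_preimage_sphereMap, hcone,
    e.symm.image_eq_preimage_symm, LinearIsometryEquiv.symm_symm, ← e.coe_toMeasurableEquiv,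
    e.measurePreserving.measure_preimage_equiv]

theorem geoDist_sphereMap (e : E ≃ₗᵢ[ℝ] E) (x y : Sph d) :
    geoDist (sphereMap e x) (sphereMap e y) = geoDist x y := by
  simp only [geoDist, sphereMap, e.inner_map_map]

theorem exists_sphereMap_eq (x y : Sph d) : ∃ e : E ≃ₗᵢ[ℝ] E, sphereMap e x = y :=
  ⟨(ℝ ∙ ((x : E) - y))ᗮ.reflection,
    Subtype.ext (Submodule.reflection_sub (by rw [norm_coe_sph, norm_coe_sph]))⟩

theorem sphMeasure_cap_eq (x y : Sph d) (φ : ℝ) :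
    sphMeasure d (cap x φ) = sphMeasure d (cap y φ) := by
  obtain ⟨e, rfl⟩ := exists_sphereMap_eq x y
  rw [← sphMeasure_preimage_sphereMap e (isClosed_cap (sphereMap e x) φ).measurableSet]
  congr 1
  ext z
  simp only [cap, mem_preimage, mem_ofPred_eq, geoDist_sphereMap]

instance : IsProbabilityMeasure (sphMeasure d) where
  measure_univ := by
    rw [sphMeasure, Measure.smul_apply, smul_eq_mul,
      ENNReal.inv_mul_cancel (Measure.measure_univ_ne_zero.mpr (Measure.toSphere_ne_zero _))
        (measure_ne_top _ _)]

theorem toReal_sphMeasure_cap (x : Sph d) (φ : ℝ) :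
    (sphMeasure d (cap x φ)).toReal = capVol d φ := by
  rw [capVol, sphMeasure_cap_eq x]

theorem capVol_nonneg (φ : ℝ) : 0 ≤ capVol d φ := ENNReal.toReal_nonneg

theorem capVol_mono : Monotone (capVol d) := fun _ _ h =>
  ENNReal.toReal_mono (measure_ne_top _ _) (measure_mono fun _ hy => le_trans hy h)

theorem sum_toReal_sphMeasure_cap {m : ℕ} (x : Fin m → Sph d) (φ : ℝ) :
    ∑ i, (sphMeasure d (cap (x i) φ)).toReal = m * capVol d φ := by
  simp [toReal_sphMeasure_cap]

theorem one_le_mul_capVol_of_cover {m : ℕ} {x : Fin m → Sph d} {φ : ℝ}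
    (hx : (⋃ i, cap (x i) φ) = univ) : 1 ≤ m * capVol d φ := by
  rw [← sum_toReal_sphMeasure_cap, ← ENNReal.toReal_sum fun _ _ => measure_ne_top _ _,
    ← ENNReal.toReal_one, ← measure_univ (μ := sphMeasure d), ← hx]
  exact ENNReal.toReal_mono (ENNReal.sum_ne_top.mpr fun _ _ => measure_ne_top _ _)
    (measure_iUnion_fintype_le _ _)

theorem exists_cover_of_le {m n : ℕ} {x : Fin m → Sph d} {φ : ℝ}
    (hx : (⋃ i, cap (x i) φ) = univ) (hmn : m ≤ n) :
    ∃ x' : Fin n → Sph d, (⋃ i, cap (x' i) φ) = univ := by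
  refine ⟨fun i => if h : (i : ℕ) < m then x ⟨i, h⟩ else Classical.arbitrary _, ?_⟩
  refine eq_univ_of_forall fun y => ?_
  obtain ⟨j, hj⟩ := mem_iUnion.mp (hx ▸ mem_univ y)
  exact mem_iUnion.mpr ⟨Fin.castLE hmn j, by simpa using hj⟩

theorem isClosed_setOf_exists_cover (n : ℕ) :
    IsClosed {φ : ℝ | ∃ x : Fin n → Sph d, (⋃ i, cap (x i) φ) = univ} := by
  have hclosed : IsClosed
      {p : (Fin n → Sph d) × ℝ | ∀ y : Sph d, ∃ i, geoDist (p.1 i) y ≤ p.2} := by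
    simp only [ofPred_forall, ofPred_exists]
    exact isClosed_iInter fun y => isClosed_iUnion_of_finite fun i =>
      isClosed_le (((continuous_apply i).comp continuous_fst).geoDist continuous_const)
        continuous_snd
  convert isClosedMap_snd_of_compactSpace _ hclosed using 1
  ext φ
  simp [eq_univ_iff_forall, cap]

theorem covRad_le {n : ℕ} {x : Fin n → Sph d} {φ : ℝ} (hφ : 0 < φ)
    (hx : (⋃ i, cap (x i) φ) = univ) : covRad d n ≤ φ :=
  csInf_le ⟨0, fun _ hψ => hψ.1.le⟩ ⟨hφ, x, hx⟩

theorem exists_cover_covRad {n : ℕ} {x : Fin n → Sph d} {φ : ℝ} (hφ : 0 < φ)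
    (hx : (⋃ i, cap (x i) φ) = univ) :
    ∃ x' : Fin n → Sph d, (⋃ i, cap (x' i) (covRad d n)) = univ := by
  have hmem : covRad d n ∈
      closure {ψ : ℝ | 0 < ψ ∧ ∃ x : Fin n → Sph d, (⋃ i, cap (x i) ψ) = univ} :=
    csInf_mem_closure ⟨φ, hφ, x, hx⟩ ⟨0, fun _ hψ => hψ.1.le⟩
  exact closure_minimal (fun _ hψ => hψ.2) (isClosed_setOf_exists_cover n) hmem

theorem covRad_pos (hd : 1 ≤ d) {n : ℕ} {x : Fin n → Sph d} {φ : ℝ} (hφ : 0 < φ)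
    (hx : (⋃ i, cap (x i) φ) = univ) : 0 < covRad d n := by
  have hnonneg : 0 ≤ covRad d n := Real.sInf_nonneg fun _ hψ => hψ.1.le
  refine hnonneg.lt_of_ne fun h => ?_
  obtain ⟨x', hx'⟩ := exists_cover_covRad hφ hx
  rw [← h] at hx'
  simp only [cap_zero, iUnion_singleton_eq_range] at hx'
  have := infinite_sph hd
  exact infinite_univ (hx' ▸ finite_range x')

theorem lt_of_cover_of_lt_covRad {m n : ℕ} {x : Fin m → Sph d} {ψ : ℝ} (hψ : 0 < ψ)
    (hx : (⋃ i, cap (x i) ψ) = univ) (hlt : ψ < covRad d n) : n < m := by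
  by_contra! hmn
  obtain ⟨x', hx'⟩ := exists_cover_of_le hx hmn
  exact hlt.not_ge (covRad_le hψ hx')

theorem card_le_of_cover {m n : ℕ} {x : Fin m → Sph d} {φ b : ℝ}
    (hx : (⋃ i, cap (x i) φ) = univ) (hb : ∑ i, (sphMeasure d (cap (x i) φ)).toReal ≤ b)
    (hn : b / capVol d φ ≤ n) : m ≤ n := by
  rw [sum_toReal_sphMeasure_cap] at hb
  have hV : 0 < capVol d φ :=
    pos_of_mul_pos_right (one_pos.trans_le (one_le_mul_capVol_of_cover hx)) m.cast_nonneg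
  exact_mod_cast ((le_div_iff₀ hV).mpr hb).trans hn

theorem mul_capVol_le_of_cover_of_lt_covRad {m n : ℕ} {x : Fin m → Sph d} {ψ b : ℝ}
    (hψ : 0 < ψ) (hx : (⋃ i, cap (x i) ψ) = univ)
    (hb : ∑ i, (sphMeasure d (cap (x i) ψ)).toReal ≤ b) (hlt : ψ < covRad d n) :
    n * capVol d ψ ≤ b := by
  rw [sum_toReal_sphMeasure_cap] at hb
  have hnm : (n : ℝ) ≤ m := by exact_mod_cast (lt_of_cover_of_lt_covRad hψ hx hlt).le
  exact (mul_le_mul_of_nonneg_right hnm (capVol_nonneg ψ)).trans hb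

theorem capDisp_nonneg (P : Set (Sph d)) : 0 ≤ capDisp P :=
  Real.sSup_nonneg fun _ ⟨_, _, _, _, hv⟩ => hv ▸ ENNReal.toReal_nonneg

theorem minCapDisp_le_capDisp {n : ℕ} (x : Fin n → Sph d) :
    minCapDisp d n ≤ capDisp (range x) :=
  csInf_le ⟨0, fun _ ⟨_, hv⟩ => hv ▸ capDisp_nonneg _⟩ ⟨x, rfl⟩

theorem capDisp_le_of_cover {n : ℕ} {x : Fin n → Sph d} {τ c : ℝ} (hτ : 0 < τ)
    (hx : (⋃ i, cap (x i) τ) = univ) (hc : ∀ ρ < τ, capVol d ρ ≤ c) :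
    capDisp (range x) ≤ c := by
  refine Real.sSup_le ?_ ((capVol_nonneg 0).trans (hc 0 hτ))
  rintro _ ⟨z, ρ, -, hempty, rfl⟩
  obtain ⟨i, hi⟩ := mem_iUnion.mp (hx ▸ mem_univ z)
  have hρ : ρ < τ := by
    by_contra! hτρ
    have hmem : x i ∈ cap z ρ := (geoDist_comm z (x i)).trans_le (le_trans hi hτρ)
    exact (eq_empty_iff_forall_notMem.mp hempty) (x i) ⟨hmem, mem_range_self i⟩
  rw [toReal_sphMeasure_cap]
  exact hc ρ hρ

end

theorem minCapDisp_le_of_covers_general (d : ℕ) (hd : 2 ≤ d) (φ₀ : ℝ)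
    (hφ₀ : φ₀ ∈ Set.Ioc (0 : ℝ) (π / 2)) (D : ℝ → ℝ)
    (hcont : ContinuousOn D (Set.Ioc 0 φ₀))
    (hcover : ∀ φ ∈ Set.Ioc (0 : ℝ) φ₀, ∃ (m : ℕ) (x : Fin m → Sph d),
      (⋃ i, cap (x i) φ) = Set.univ ∧
      ∑ i : Fin m, (sphMeasure d (cap (x i) φ)).toReal ≤ D φ) :
    ∀ n : ℕ, D φ₀ / capVol d φ₀ ≤ (n : ℝ) →
      (n : ℝ) * minCapDisp d n ≤ D (covRad d n) := by
  intro n hn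
  obtain ⟨m₀, x₀, hx₀, hD₀⟩ := hcover φ₀ ⟨hφ₀.1, le_rfl⟩
  obtain ⟨x₁, hx₁⟩ := exists_cover_of_le hx₀ (card_le_of_cover hx₀ hD₀ hn)
  set τ := covRad d n
  have hτ : τ ∈ Ioc 0 φ₀ := ⟨covRad_pos (by omega) hφ₀.1 hx₁, covRad_le hφ₀.1 hx₁⟩
  obtain ⟨P, hP⟩ := exists_cover_covRad hφ₀.1 hx₁
  have hnpos : (0 : ℝ) < n :=
    pos_of_mul_pos_left (one_pos.trans_le (one_le_mul_capVol_of_cover hP)) (capVol_nonneg τ)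
  have hlim : ∀ ρ < τ, n * capVol d ρ ≤ D τ := fun ρ =>
    (capVol_mono.const_mul hnpos.le).le_of_le_on_Ioo_of_continuousWithinAt hτ.1
      ((hcont τ hτ).mono (Ioo_subset_Ioc_self.trans (Ioc_subset_Ioc_right hτ.2)))
      fun ψ hψ => by
        obtain ⟨m, x, hx, hDψ⟩ := hcover ψ ⟨hψ.1, hψ.2.le.trans hτ.2⟩
        exact mul_capVol_le_of_cover_of_lt_covRad hψ.1 hx hDψ hψ.2
  calc (n : ℝ) * minCapDisp d n ≤ n * capDisp (range P) := by
        gcongr; exact minCapDisp_le_capDisp P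
    _ ≤ n * (D τ / n) := by
        gcongr
        exact capDisp_le_of_cover hτ.1 hP fun ρ hρ => (le_div_iff₀' hnpos).mpr (hlim ρ hρ)
    _ = D τ := mul_div_cancel₀ _ hnpos.ne'

/-- If `D : (0,φ₀] → [1,∞)` is continuous and decreasing and for
every `φ ∈ (0,φ₀]` there is a cover of `S^d` by finitely many caps of radius `φ`
with density at most `D(φ)`, then `n·disp_C(n,d) ≤ D(φ(n))` for all
`n ≥ D(φ₀)/V(φ₀)`. -/
theorem minCapDisp_le_of_covers (d : ℕ) (hd : 2 ≤ d) (φ₀ : ℝ)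
    (hφ₀ : φ₀ ∈ Set.Ioc (0 : ℝ) (π / 2)) (D : ℝ → ℝ)
    (hcont : ContinuousOn D (Set.Ioc 0 φ₀))
    (hanti : AntitoneOn D (Set.Ioc 0 φ₀))
    (hone : ∀ φ ∈ Set.Ioc (0 : ℝ) φ₀, 1 ≤ D φ)
    (hcover : ∀ φ ∈ Set.Ioc (0 : ℝ) φ₀, ∃ (m : ℕ) (x : Fin m → Sph d),
      (⋃ i, cap (x i) φ) = Set.univ ∧
      ∑ i : Fin m, (sphMeasure d (cap (x i) φ)).toReal ≤ D φ) :
    ∀ n : ℕ, D φ₀ / capVol d φ₀ ≤ (n : ℝ) →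
      (n : ℝ) * minCapDisp d n ≤ D (covRad d n) :=
  minCapDisp_le_of_covers_general d hd φ₀ hφ₀ D hcont hcover
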